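/- arXiv:2502.04549 — 5 statements merged into one kernel-verified Lean document; each statement's English description precedes it below -/
import Mathlib

section
/- Let (p_b, p_1, …, p_k) be probability densities on ℝ^n that are Factorized Conditionals with respect to a partition {M_b, M_1, …, M_k} of the coordinates. Then the composed density satisfies, for all x ∈ ℝ^n, C[p_b, p_1, …, p_k](x) = p_b(x|_{M_b}) · ∏_{i=1}^k p_i(x|_{M_i}) (with normalization constant Z = 1). In particular, the marginal of the composed distribution on the coordinates M_i equals the marginal of p_i on M_i for every i = 1,…,k, i.e. the composition is a projective composition with respect to the coordinate projections Π_i(x) = x|_{M_i}. -/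
/-! The factorization of `pb` makes its marginal on `(M i)ᶜ` equal to
`pb(x|Mb) ∏_{j ≠ i} pb(x|M j)`, so every ratio `p i / pb` reduces to `p i(x|M i) / pb(x|M i)`
and the product collapses to the pointwise formula. Integrals of products of functions of
disjoint blocks of coordinates split by Fubini; hence each factor `pb(x|M i)` can be exchanged
for `p i(x|M i)`, which has the same mass, without changing the total mass `1`, and the same
splitting computes the marginals of the composition. -/

open MeasureTheory Finset Real

noncomputable section

/-- The marginal density of `p` on the coordinates in `S`: integrate out the
coordinates outside `S`. The result depends only on the coordinates of `x` in `S`. -/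
def marginal {n : ℕ} (S : Finset (Fin n)) (p : (Fin n → ℝ) → ℝ) (x : Fin n → ℝ) : ℝ :=
  ∫ y : {i : Fin n // i ∉ S} → ℝ,
    p (fun i => if h : i ∈ S then x i else y ⟨i, h⟩)

/-- `p` is a probability density on `ℝ^n`. -/
def IsDensity {n : ℕ} (p : (Fin n → ℝ) → ℝ) : Prop :=
  (∀ x, 0 ≤ p x) ∧ Integrable p ∧ (∫ x, p x) = 1

/-- `Mb, M 1, …, M k` form a partition of the coordinates `{1,…,n}`. -/
def IsCoordPartition {n k : ℕ} (Mb : Finset (Fin n)) (M : Fin k → Finset (Fin n)) : Prop :=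
  (∀ i, Disjoint Mb (M i)) ∧ (∀ i j, i ≠ j → Disjoint (M i) (M j)) ∧
    Mb ∪ Finset.univ.biUnion M = Finset.univ

/-- Factorized Conditionals: each `p i` samples the coordinates `M i` in its own way and
the remaining coordinates as the background `pb`, and the blocks are independent under `pb`. -/
def FactorizedConditionals {n k : ℕ} (Mb : Finset (Fin n)) (M : Fin k → Finset (Fin n))
    (pb : (Fin n → ℝ) → ℝ) (p : Fin k → (Fin n → ℝ) → ℝ) : Prop :=
  IsCoordPartition Mb M ∧
  (∀ i x, p i x = marginal (M i) (p i) x * marginal (M i)ᶜ pb x) ∧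
  (∀ x, pb x = marginal Mb pb x * ∏ i, marginal (M i) pb x)

/-- The unnormalized composition `pb(x) ∏ i, p i (x) / pb(x)`. -/
def compRaw {n k : ℕ} (pb : (Fin n → ℝ) → ℝ) (p : Fin k → (Fin n → ℝ) → ℝ)
    (x : Fin n → ℝ) : ℝ :=
  pb x * ∏ i, p i x / pb x

/-- The composition operator `C[pb, p 1, …, p k]`, normalized to a probability density. -/
def comp {n k : ℕ} (pb : (Fin n → ℝ) → ℝ) (p : Fin k → (Fin n → ℝ) → ℝ)
    (x : Fin n → ℝ) : ℝ :=
  compRaw pb p x / ∫ y, compRaw pb p y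

open Function

section

variable {n : ℕ}

def blockEquiv (S : Finset (Fin n)) :
    (Fin n → ℝ) ≃ᵐ ({i // i ∈ S} → ℝ) × ({i // i ∉ S} → ℝ) :=
  MeasurableEquiv.piEquivPiSubtypeProd (fun _ => ℝ) (· ∈ S)

theorem blockEquiv_symm_apply (S : Finset (Fin n)) (a : {i // i ∈ S} → ℝ)
    (b : {i // i ∉ S} → ℝ) (i : Fin n) :
    (blockEquiv S).symm (a, b) i = if h : i ∈ S then a ⟨i, h⟩ else b ⟨i, h⟩ := rfl

theorem measurePreserving_blockEquiv (S : Finset (Fin n)) :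
    MeasurePreserving (blockEquiv S) volume volume := by
  convert volume_preserving_piEquivPiSubtypeProd (fun _ : Fin n => ℝ) (· ∈ S) <;> rfl

theorem marginal_eq_integral_blockEquiv (S : Finset (Fin n)) (q : (Fin n → ℝ) → ℝ)
    (x : Fin n → ℝ) : marginal S q x = ∫ y, q ((blockEquiv S).symm (fun j => x j, y)) := rfl

theorem dependsOn_marginal (S : Finset (Fin n)) (q : (Fin n → ℝ) → ℝ) :
    DependsOn (marginal S q) S := by
  intro x y hxy
  simp only [marginal]
  congr! 3 with z
  funext i
  split_ifs with hi
  exacts [hxy i hi, rfl]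

theorem DependsOn.apply_blockEquiv_symm_fst {S : Finset (Fin n)} {B : (Fin n → ℝ) → ℝ}
    (hB : DependsOn B S) (a : {i // i ∈ S} → ℝ) (b b' : {i // i ∉ S} → ℝ) :
    B ((blockEquiv S).symm (a, b)) = B ((blockEquiv S).symm (a, b')) :=
  hB fun i (hi : i ∈ S) => by simp only [blockEquiv_symm_apply, dif_pos hi]

theorem DependsOn.apply_blockEquiv_symm_snd {S : Finset (Fin n)} {A : (Fin n → ℝ) → ℝ}
    (hA : DependsOn A (S : Set (Fin n))ᶜ) (a a' : {i // i ∈ S} → ℝ) (b : {i // i ∉ S} → ℝ) :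
    A ((blockEquiv S).symm (a, b)) = A ((blockEquiv S).symm (a', b)) :=
  hA fun i (hi : i ∉ S) => by simp only [blockEquiv_symm_apply, dif_neg hi]

theorem marginal_mul_of_dependsOn {S : Finset (Fin n)} {B : (Fin n → ℝ) → ℝ}
    (hB : DependsOn B S) (A : (Fin n → ℝ) → ℝ) (x : Fin n → ℝ) :
    marginal S (fun z => B z * A z) x = B x * marginal S A x := by
  simp only [marginal, ← integral_const_mul]
  congr 1 with y
  rw [hB (y := x) fun i (hi : i ∈ S) => dif_pos hi]

theorem marginal_eq_of_dependsOn_compl {S : Finset (Fin n)} {A : (Fin n → ℝ) → ℝ}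
    (hA : DependsOn A (S : Set (Fin n))ᶜ) (x x' : Fin n → ℝ) :
    marginal S A x = marginal S A x' := by
  simp only [marginal_eq_integral_blockEquiv]
  congr! 2 with y
  exact hA.apply_blockEquiv_symm_snd _ _ y

theorem integral_marginal_blockEquiv_symm (S : Finset (Fin n)) {q : (Fin n → ℝ) → ℝ}
    (hq : Integrable q) (b : {i // i ∉ S} → ℝ) :
    ∫ a, marginal S q ((blockEquiv S).symm (a, b)) = ∫ x, q x := by
  have hmp := (measurePreserving_blockEquiv S).symm
  have hmerge : ∀ a, (fun j : {i // i ∈ S} => (blockEquiv S).symm (a, b) j) = a :=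
    fun a => funext fun j => by simp only [blockEquiv_symm_apply, dif_pos j.2]
  simp only [marginal_eq_integral_blockEquiv, hmerge]
  rw [← hmp.integral_comp' (g := q), Measure.volume_eq_prod]
  refine integral_integral ?_
  rw [← Measure.volume_eq_prod]
  exact (hmp.integrable_comp_emb (MeasurableEquiv.measurableEmbedding _)).mpr hq

theorem integral_mul_marginal {S : Finset (Fin n)} {A : (Fin n → ℝ) → ℝ}
    (hA : DependsOn A (S : Set (Fin n))ᶜ) {q : (Fin n → ℝ) → ℝ} (hq : Integrable q) :
    ∫ x, A x * marginal S q x = marginal S A 0 * ∫ x, q x := by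
  rw [← integral_marginal_blockEquiv_symm S hq 0,
    ← (measurePreserving_blockEquiv S).symm.integral_comp' (g := fun x => A x * marginal S q x)]
  have hprod : ∀ z : ({i // i ∈ S} → ℝ) × ({i // i ∉ S} → ℝ),
      A ((blockEquiv S).symm z) * marginal S q ((blockEquiv S).symm z) =
        marginal S q ((blockEquiv S).symm (z.1, 0)) * A ((blockEquiv S).symm (0, z.2)) :=
    fun ⟨a, b⟩ => by
      rw [hA.apply_blockEquiv_symm_snd a 0 b,
        (dependsOn_marginal S q).apply_blockEquiv_symm_fst a b 0, mul_comm]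
  simp only [hprod]
  rw [Measure.volume_eq_prod, mul_comm, integral_prod_mul
    (fun a => marginal S q ((blockEquiv S).symm (a, 0))) fun b => A ((blockEquiv S).symm (0, b))]
  rfl

/-- `marginal Sᶜ` integrates over `{i // i ∉ Sᶜ} → ℝ`, reindexed here by the `S`-coordinates. -/
theorem marginal_compl_of_dependsOn {S : Finset (Fin n)} {φ : (Fin n → ℝ) → ℝ}
    (hφ : DependsOn φ S) (x : Fin n → ℝ) :
    marginal Sᶜ φ x = ∫ a, φ ((blockEquiv S).symm (a, 0)) := by
  let σ : {i // i ∈ S} ≃ {i // i ∉ Sᶜ} := Equiv.subtypeEquivRight fun i => by simp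
  rw [marginal, ← (volume_measurePreserving_piCongrLeft (fun _ => ℝ) σ).integral_comp']
  congr 1 with a
  refine hφ fun i (hi : i ∈ S) => ?_
  simp only [Finset.mem_compl, hi, not_true_eq_false, ↓reduceDIte, blockEquiv_symm_apply]
  exact MeasurableEquiv.piCongrLeft_apply_apply (β := fun _ => ℝ) σ a ⟨i, hi⟩

theorem marginal_compl_marginal (S : Finset (Fin n)) {q : (Fin n → ℝ) → ℝ}
    (hq : Integrable q) (x : Fin n → ℝ) : marginal Sᶜ (marginal S q) x = ∫ y, q y := by
  rw [marginal_compl_of_dependsOn (dependsOn_marginal S q),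
    integral_marginal_blockEquiv_symm S hq]

theorem dependsOn_mul_prod_erase {k : ℕ} {M : Fin k → Finset (Fin n)}
    (hM : ∀ i j, i ≠ j → Disjoint (M i) (M j)) (i : Fin k) {f : (Fin n → ℝ) → ℝ}
    (hf : DependsOn f (M i : Set (Fin n))ᶜ) {φ : Fin k → (Fin n → ℝ) → ℝ}
    (hφ : ∀ j, DependsOn (φ j) (M j)) :
    DependsOn (fun x => f x * ∏ j ∈ univ.erase i, φ j x) (M i : Set (Fin n))ᶜ := by
  intro x y hxy
  refine congrArg₂ (· * ·) (hf hxy) (prod_congr rfl fun j hj => hφ j fun l hl => hxy l ?_)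
  exact fun hli => disjoint_left.mp (hM j i (ne_of_mem_erase hj)) hl hli

theorem integral_mul_prod_marginal_update {k : ℕ} {M : Fin k → Finset (Fin n)}
    (hM : ∀ i j, i ≠ j → Disjoint (M i) (M j)) {f : (Fin n → ℝ) → ℝ}
    (hf : ∀ i, DependsOn f (M i : Set (Fin n))ᶜ) (r : Fin k → (Fin n → ℝ) → ℝ) (i : Fin k)
    {s : (Fin n → ℝ) → ℝ} (hs : Integrable s) (hri : Integrable (r i))
    (hsr : ∫ x, s x = ∫ x, r i x) :
    ∫ x, f x * ∏ j, marginal (M j) (update r i s j) x =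
      ∫ x, f x * ∏ j, marginal (M j) (r j) x := by
  have hsplit : ∀ (t : Fin k → (Fin n → ℝ) → ℝ) x, f x * ∏ j, marginal (M j) (t j) x =
      (f x * ∏ j ∈ univ.erase i, marginal (M j) (t j) x) * marginal (M i) (t i) x := by
    intro t x
    rw [← mul_prod_erase univ _ (mem_univ i)]
    ring
  have hA := dependsOn_mul_prod_erase hM i (hf i) fun j => dependsOn_marginal (M j) (r j)
  have hprod : ∀ x, ∏ j ∈ univ.erase i, marginal (M j) (update r i s j) x =
      ∏ j ∈ univ.erase i, marginal (M j) (r j) x :=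
    fun x => prod_congr rfl fun j hj => by rw [update_of_ne (ne_of_mem_erase hj)]
  simp only [hsplit, hprod, update_self]
  rw [integral_mul_marginal hA hs, integral_mul_marginal hA hri, hsr]

theorem integral_mul_prod_marginal_congr {k : ℕ} {M : Fin k → Finset (Fin n)}
    (hM : ∀ i j, i ≠ j → Disjoint (M i) (M j)) {f : (Fin n → ℝ) → ℝ}
    (hf : ∀ i, DependsOn f (M i : Set (Fin n))ᶜ) {q q' : Fin k → (Fin n → ℝ) → ℝ}
    (hq : ∀ i, Integrable (q i)) (hq' : ∀ i, Integrable (q' i))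
    (hqq' : ∀ i, ∫ x, q i x = ∫ x, q' i x) :
    ∫ x, f x * ∏ i, marginal (M i) (q i) x = ∫ x, f x * ∏ i, marginal (M i) (q' i) x := by
  classical
  suffices h : ∀ T : Finset (Fin k),
      ∫ x, f x * ∏ i, marginal (M i) (T.piecewise q q' i) x =
        ∫ x, f x * ∏ i, marginal (M i) (q' i) x by
    simpa only [Finset.piecewise_univ] using h univ
  intro T
  induction T using Finset.induction_on with
  | empty => simp only [Finset.piecewise_empty]
  | insert i T hiT ih =>
    rw [Finset.piecewise_insert, integral_mul_prod_marginal_update hM hf _ i (hq i)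
      (by simpa only [piecewise_eq_of_notMem _ _ _ hiT] using hq' i)
      (by rw [piecewise_eq_of_notMem _ _ _ hiT, hqq']), ih]

namespace FactorizedConditionals

variable {k : ℕ} {Mb : Finset (Fin n)} {M : Fin k → Finset (Fin n)}
  {pb : (Fin n → ℝ) → ℝ} {p : Fin k → (Fin n → ℝ) → ℝ}

theorem dependsOn_marginal_base (hFC : FactorizedConditionals Mb M pb p) (i : Fin k) :
    DependsOn (marginal Mb pb) (M i : Set (Fin n))ᶜ :=
  (dependsOn_marginal Mb pb).mono fun _ hl hli => disjoint_left.mp (hFC.1.1 i) hl hli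

theorem apply_eq_mul_marginal (hFC : FactorizedConditionals Mb M pb p) (i : Fin k)
    (x : Fin n → ℝ) :
    pb x = (marginal Mb pb x * ∏ j ∈ univ.erase i, marginal (M j) pb x) *
      marginal (M i) pb x := by
  rw [hFC.2.2 x, ← mul_prod_erase univ _ (mem_univ i)]
  ring

theorem marginal_compl (hFC : FactorizedConditionals Mb M pb p) (hpb : Integrable pb)
    (hpb1 : ∫ x, pb x = 1) (i : Fin k) (x : Fin n → ℝ) :
    marginal (M i)ᶜ pb x = marginal Mb pb x * ∏ j ∈ univ.erase i, marginal (M j) pb x := by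
  have hR := dependsOn_mul_prod_erase hFC.1.2.1 i (hFC.dependsOn_marginal_base i)
    fun j => dependsOn_marginal (M j) pb
  rw [← coe_compl] at hR
  calc marginal (M i)ᶜ pb x
      = marginal (M i)ᶜ (fun z => (marginal Mb pb z * ∏ j ∈ univ.erase i, marginal (M j) pb z) *
          marginal (M i) pb z) x := by
        simp only [← hFC.apply_eq_mul_marginal i]
    _ = (marginal Mb pb x * ∏ j ∈ univ.erase i, marginal (M j) pb x) *
          marginal (M i)ᶜ (marginal (M i) pb) x := marginal_mul_of_dependsOn hR _ x
    _ = marginal Mb pb x * ∏ j ∈ univ.erase i, marginal (M j) pb x := by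
        rw [marginal_compl_marginal _ hpb, hpb1, mul_one]

theorem compRaw_eq (hFC : FactorizedConditionals Mb M pb p) (hpb : Integrable pb)
    (hpb1 : ∫ x, pb x = 1) (hpb0 : ∀ x, pb x ≠ 0) (x : Fin n → ℝ) :
    compRaw pb p x = marginal Mb pb x * ∏ i, marginal (M i) (p i) x := by
  have hx := hpb0 x
  rw [hFC.2.2 x] at hx
  have hratio : ∀ i, p i x / pb x = marginal (M i) (p i) x / marginal (M i) pb x := by
    intro i
    have hR := left_ne_zero_of_mul (hFC.apply_eq_mul_marginal i x ▸ hpb0 x)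
    rw [hFC.2.1 i x, hFC.marginal_compl hpb hpb1 i x, hFC.apply_eq_mul_marginal i x,
      mul_comm (marginal (M i) (p i) x), mul_div_mul_left _ _ hR]
  rw [compRaw, prod_congr rfl fun i _ => hratio i, prod_div_distrib, hFC.2.2 x, mul_assoc,
    mul_div_cancel₀ _ (right_ne_zero_of_mul hx)]

theorem integral_compRaw (hFC : FactorizedConditionals Mb M pb p) (hpb : Integrable pb)
    (hpb1 : ∫ x, pb x = 1) (hpb0 : ∀ x, pb x ≠ 0) (hp : ∀ i, Integrable (p i))
    (hp1 : ∀ i, ∫ x, p i x = 1) :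
    ∫ x, compRaw pb p x = 1 :=
  calc ∫ x, compRaw pb p x
      = ∫ x, marginal Mb pb x * ∏ i, marginal (M i) (p i) x := by
        simp only [hFC.compRaw_eq hpb hpb1 hpb0]
    _ = ∫ x, marginal Mb pb x * ∏ i, marginal (M i) pb x :=
        integral_mul_prod_marginal_congr hFC.1.2.1 hFC.dependsOn_marginal_base hp
          (fun _ => hpb) fun i => by rw [hp1, hpb1]
    _ = 1 := by simp only [← hFC.2.2, hpb1]

theorem marginal_compRaw (hFC : FactorizedConditionals Mb M pb p) (hpb : Integrable pb)
    (hpb1 : ∫ x, pb x = 1) (hpb0 : ∀ x, pb x ≠ 0) (hp : ∀ i, Integrable (p i))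
    (hp1 : ∀ i, ∫ x, p i x = 1) (i : Fin k) (x : Fin n → ℝ) :
    marginal (M i) (compRaw pb p) x = marginal (M i) (p i) x := by
  set A := fun z => marginal Mb pb z * ∏ j ∈ univ.erase i, marginal (M j) (p j) z
  have hA : DependsOn A (M i : Set (Fin n))ᶜ := dependsOn_mul_prod_erase hFC.1.2.1 i
    (hFC.dependsOn_marginal_base i) fun j => dependsOn_marginal (M j) (p j)
  have hcomp : compRaw pb p = fun z => marginal (M i) (p i) z * A z := funext fun z => by
    rw [hFC.compRaw_eq hpb hpb1 hpb0, ← mul_prod_erase univ _ (mem_univ i)]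
    ring
  have hA1 : marginal (M i) A 0 = 1 := by
    have h := integral_mul_marginal hA (hp i)
    rw [hp1, mul_one] at h
    rw [← h, ← hFC.integral_compRaw hpb hpb1 hpb0 hp hp1, hcomp]
    simp only [mul_comm]
  rw [hcomp, marginal_mul_of_dependsOn (dependsOn_marginal _ _),
    marginal_eq_of_dependsOn_compl hA x 0, hA1, mul_one]

end FactorizedConditionals

end

/-- **Correctness of Composition.** If `(pb, p 1, …, p k)` are Factorized Conditionals
with respect to the partition `{Mb, M 1, …, M k}`, then the composed density equals
`pb(x|Mb) ∏ i, p i (x|M i)` (with normalization constant `Z = 1`), and in particular its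
marginal on `M i` equals that of `p i`, i.e. it is a projective composition w.r.t. the
coordinate projections. -/
theorem statement_0 {n k : ℕ} (Mb : Finset (Fin n)) (M : Fin k → Finset (Fin n))
    (pb : (Fin n → ℝ) → ℝ) (p : Fin k → (Fin n → ℝ) → ℝ)
    (hpb : IsDensity pb) (hp : ∀ i, IsDensity (p i))
    (hpbpos : ∀ x, 0 < pb x)
    (hFC : FactorizedConditionals Mb M pb p) :
    (∫ x, compRaw pb p x) = 1 ∧
    (∀ x, compRaw pb p x = marginal Mb pb x * ∏ i, marginal (M i) (p i) x) ∧
    (∀ i x, marginal (M i) (compRaw pb p) x = marginal (M i) (p i) x) := by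
  obtain ⟨-, hpbInt, hpb1⟩ := hpb
  have hpb0 x := (hpbpos x).ne'
  exact ⟨hFC.integral_compRaw hpbInt hpb1 hpb0 (fun i => (hp i).2.1) fun i => (hp i).2.2,
    hFC.compRaw_eq hpbInt hpb1 hpb0,
    hFC.marginal_compRaw hpbInt hpb1 hpb0 (fun i => (hp i).2.1) fun i => (hp i).2.2⟩
end
end

section
/- The composition operator is reparameterization-equivariant: for every C¹ diffeomorphism A: ℝ^n → ℝ^n and every tuple of probability densities (p_b, p_1, …, p_k) on ℝ^n, C[A♯p_b, A♯p_1, …, A♯p_k] = A♯ C[p_b, p_1, …, p_k]. -/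
open MeasureTheory Finset Real

noncomputable section

/-- The pushforward density `(A♯p)(z) = p(A⁻¹ z) |det ∇A⁻¹(z)|`, expressed in terms of
the inverse map `B = A⁻¹`. -/
def pushfwd {n : ℕ} (B : (Fin n → ℝ) → (Fin n → ℝ)) (p : (Fin n → ℝ) → ℝ)
    (z : Fin n → ℝ) : ℝ :=
  p (B z) * |(fderiv ℝ B z).det|

/-
The Jacobian factor is common to all the pushed-forward densities, so it cancels in each
ratio `p i / pb` and survives once in the unnormalized composition; the change of variables
formula then shows that pushing forward does not change the normalizing constant.
-/

theorem compRaw_mul_right {n k : ℕ} (pb : (Fin n → ℝ) → ℝ) (p : Fin k → (Fin n → ℝ) → ℝ)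
    (J : (Fin n → ℝ) → ℝ) (x : Fin n → ℝ) :
    compRaw (fun y => pb y * J y) (fun i y => p i y * J y) x = compRaw pb p x * J x := by
  rcases eq_or_ne (J x) 0 with hJ | hJ
  · simp [compRaw, hJ]
  · simp only [compRaw, mul_div_mul_right _ _ hJ]
    ring

theorem compRaw_pushfwd {n k : ℕ} (B : (Fin n → ℝ) → (Fin n → ℝ))
    (pb : (Fin n → ℝ) → ℝ) (p : Fin k → (Fin n → ℝ) → ℝ) :
    compRaw (pushfwd B pb) (fun i => pushfwd B (p i)) = pushfwd B (compRaw pb p) :=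
  funext <| compRaw_mul_right (pb ∘ B) (fun i => p i ∘ B) _

theorem integral_pushfwd {n : ℕ} {B : (Fin n → ℝ) → (Fin n → ℝ)}
    (hB : Differentiable ℝ B) (hBbij : Function.Bijective B) (g : (Fin n → ℝ) → ℝ) :
    ∫ z, pushfwd B g z = ∫ x, g x := by
  have h := integral_image_eq_integral_abs_det_fderiv_smul volume MeasurableSet.univ
    (fun x _ => (hB x).hasFDerivAt.hasFDerivWithinAt) hBbij.injective.injOn g
  rw [Set.image_univ, hBbij.surjective.range_eq] at h
  simpa [pushfwd, smul_eq_mul, mul_comm] using h.symm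

theorem statement_4_general {n k : ℕ}
    (A B : (Fin n → ℝ) → (Fin n → ℝ))
    (hB : ContDiff ℝ 1 B)
    (hBA : Function.LeftInverse B A) (hAB : Function.RightInverse B A)
    (pb : (Fin n → ℝ) → ℝ) (p : Fin k → (Fin n → ℝ) → ℝ) :
    ∀ z, comp (pushfwd B pb) (fun i => pushfwd B (p i)) z = pushfwd B (comp pb p) z := by
  intro z
  have hBbij : Function.Bijective B := ⟨hAB.injective, hBA.surjective⟩
  rw [comp, compRaw_pushfwd, integral_pushfwd (hB.differentiable one_ne_zero) hBbij]
  exact mul_div_right_comm _ _ _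

/-- **Reparameterization Equivariance.** For every `C¹` diffeomorphism `A` (with inverse
`B`) and every tuple of probability densities `(pb, p 1, …, p k)` on `ℝ^n`,
`C[A♯pb, A♯p 1, …, A♯p k] = A♯ C[pb, p 1, …, p k]`. -/
theorem statement_4 {n k : ℕ}
    (A B : (Fin n → ℝ) → (Fin n → ℝ))
    (hA : ContDiff ℝ 1 A) (hB : ContDiff ℝ 1 B)
    (hBA : Function.LeftInverse B A) (hAB : Function.RightInverse B A)
    (pb : (Fin n → ℝ) → ℝ) (p : Fin k → (Fin n → ℝ) → ℝ)
    (hpb : IsDensity pb) (hp : ∀ i, IsDensity (p i))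
    (hpbpos : ∀ x, 0 < pb x) :
    ∀ z, comp (pushfwd B pb) (fun i => pushfwd B (p i)) z = pushfwd B (comp pb p) z :=
  statement_4_general A B hB hBA hAB pb p
end
end

section
/- Let (p_b, p_1, …, p_k) be probability densities on ℝ^n that are Factorized Conditionals with respect to a partition {M_b, M_1, …, M_k}, with finite means μ_i = E_{p_i}[x] for i = 1,…,k and μ_b = E_{p_b}[x]. Then each mean-difference vector μ_i − μ_b is supported on the coordinates M_i, and consequently (μ_i − μ_b)ᵀ(μ_j − μ_b) = 0 for all i ≠ j. -/
open MeasureTheory Finset Real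

noncomputable section

/-!
Split `ℝⁿ = ℝ^{M_iᶜ} × ℝ^{M_i}`. The factorization writes `p_i(a, b) = H(a) K(b)`, where `H` is
the `M_iᶜ`-marginal of `p_b` and `K` depends only on the `M_i`-coordinates. Since `∫ H = ∫ p_b = 1`
and `∫ p_i = 1`, also `∫ K = 1`, so for `l ∉ M_i` both `∫ x_l p_i` and `∫ x_l p_b` equal
`∫ a_l H(a) da` by Fubini. Orthogonality then follows from the disjointness of `M_i` and `M_j`.
-/

theorem integral_fst_mul_eq_of_eq_marginal_mul {α β : Type*} [MeasurableSpace α]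
    [MeasurableSpace β] {μ : Measure α} {ν : Measure β} [SFinite μ] [SFinite ν]
    {P Q : α × β → ℝ} {K : β → ℝ} (hQ : Integrable Q (μ.prod ν))
    (hQ1 : ∫ z, Q z ∂μ.prod ν = 1) (hP1 : ∫ z, P z ∂μ.prod ν = 1)
    (hPQ : ∀ z, P z = (∫ b, Q (z.1, b) ∂ν) * K z.2) (f : α → ℝ)
    (hfQ : Integrable (fun z => f z.1 * Q z) (μ.prod ν)) :
    ∫ z, f z.1 * P z ∂μ.prod ν = ∫ z, f z.1 * Q z ∂μ.prod ν := by
  set H : α → ℝ := fun a => ∫ b, Q (a, b) ∂ν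
  have hH : ∫ a, H a ∂μ = 1 := (integral_prod Q hQ).symm.trans hQ1
  have hK : ∫ b, K b ∂ν = 1 :=
    calc ∫ b, K b ∂ν = (∫ a, H a ∂μ) * ∫ b, K b ∂ν := by rw [hH, one_mul]
      _ = ∫ z, P z ∂μ.prod ν := by simp_rw [hPQ]; exact (integral_prod_mul H K).symm
      _ = 1 := hP1
  calc ∫ z, f z.1 * P z ∂μ.prod ν = ∫ z, f z.1 * H z.1 * K z.2 ∂μ.prod ν := by
        simp only [hPQ, H, mul_assoc]
    _ = (∫ a, f a * H a ∂μ) * ∫ b, K b ∂ν := integral_prod_mul (fun a => f a * H a) K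
    _ = ∫ a, ∫ b, f a * Q (a, b) ∂ν ∂μ := by simp_rw [hK, mul_one, H, integral_const_mul]
    _ = ∫ z, f z.1 * Q z ∂μ.prod ν := (integral_prod _ hfQ).symm

theorem marginal_congr {n : ℕ} (S : Finset (Fin n)) (q : (Fin n → ℝ) → ℝ)
    {x x' : Fin n → ℝ} (h : ∀ j ∈ S, x j = x' j) :
    marginal S q x = marginal S q x' := by
  unfold marginal
  congr 1 with y
  congr 1 with j
  split_ifs with hj
  exacts [h j hj, rfl]

theorem marginal_eq_integral_piEquivPiSubtypeProd_symm {n : ℕ} (S : Finset (Fin n))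
    (p : (Fin n → ℝ) → ℝ) (x : Fin n → ℝ) :
    marginal S p x = ∫ y, p ((MeasurableEquiv.piEquivPiSubtypeProd (fun _ : Fin n => ℝ)
      (· ∈ S)).symm (fun i => x i, y)) := rfl

theorem integral_coord_mul_eq_of_eq_mul_marginal_compl {n : ℕ} {S : Finset (Fin n)}
    {q pb : (Fin n → ℝ) → ℝ} (hq1 : ∫ x, q x = 1) (hpb : Integrable pb) (hpb1 : ∫ x, pb x = 1)
    (hfac : ∀ x, q x = marginal S q x * marginal Sᶜ pb x) {l : Fin n} (hl : l ∉ S)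
    (hpbl : Integrable fun x : Fin n → ℝ => x l * pb x) :
    ∫ x, x l * q x = ∫ x, x l * pb x := by
  let e := MeasurableEquiv.piEquivPiSubtypeProd (fun _ : Fin n => ℝ) (· ∈ Sᶜ)
  -- `convert` identifies the two `Fintype` instances on `{j // j ∈ Sᶜ}` used to build `volume`.
  have he : MeasurePreserving e.symm := by
    convert (volume_preserving_piEquivPiSubtypeProd (fun _ : Fin n => ℝ) (· ∈ Sᶜ)).symm
  have hl' : l ∈ Sᶜ := mem_compl.2 hl
  have hcoord : ∀ z, e.symm z l = z.1 ⟨l, hl'⟩ := fun z => dif_pos hl'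
  have hfac' : ∀ z, q (e.symm z) =
      (∫ b, pb (e.symm (z.1, b))) * marginal S q (e.symm (0, z.2)) := by
    intro z
    have hcompl : (fun i : {j // j ∈ Sᶜ} => e.symm z i) = z.1 := funext fun i => dif_pos i.2
    rw [hfac, mul_comm, marginal_eq_integral_piEquivPiSubtypeProd_symm Sᶜ, hcompl]
    congr 1
    refine marginal_congr S q fun j hj => ?_
    have hj' : j ∉ Sᶜ := by simpa using hj
    simp [e, hj']
  have hint : ∀ {F : (Fin n → ℝ) → ℝ}, Integrable F → Integrable (fun z => F (e.symm z)) :=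
    fun hF => (he.integrable_comp_emb e.symm.measurableEmbedding).2 hF
  have hfQ : Integrable fun z => z.1 ⟨l, hl'⟩ * pb (e.symm z) := by
    simpa only [hcoord] using hint hpbl
  calc ∫ x, x l * q x = ∫ z, e.symm z l * q (e.symm z) := (he.integral_comp' _).symm
    _ = ∫ z, z.1 ⟨l, hl'⟩ * pb (e.symm z) := by
      simp_rw [hcoord]
      exact integral_fst_mul_eq_of_eq_marginal_mul (K := fun b => marginal S q (e.symm (0, b)))
        (hint hpb) ((he.integral_comp' pb).trans hpb1)
        ((he.integral_comp' q).trans hq1) hfac' (fun a => a ⟨l, hl'⟩) hfQ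
    _ = ∫ x, x l * pb x := by simp_rw [← hcoord]; exact he.integral_comp' (fun x => x l * pb x)

theorem statement_8_general {n k : ℕ} (Mb : Finset (Fin n)) (M : Fin k → Finset (Fin n))
    (pb : (Fin n → ℝ) → ℝ) (p : Fin k → (Fin n → ℝ) → ℝ)
    (hpb : IsDensity pb) (hp : ∀ i, IsDensity (p i))
    (hFC : FactorizedConditionals Mb M pb p)
    (hintb : ∀ l : Fin n, Integrable (fun x : Fin n → ℝ => x l * pb x)) :
    (∀ i : Fin k, ∀ l ∉ M i, (∫ x : Fin n → ℝ, x l * p i x) - (∫ x : Fin n → ℝ, x l * pb x) = 0) ∧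
    (∀ i j : Fin k, i ≠ j →
      ∑ l : Fin n,
        ((∫ x : Fin n → ℝ, x l * p i x) - (∫ x : Fin n → ℝ, x l * pb x)) *
        ((∫ x : Fin n → ℝ, x l * p j x) - (∫ x : Fin n → ℝ, x l * pb x)) = 0) := by
  obtain ⟨⟨-, hdisj, -⟩, hfac, -⟩ := hFC
  have hsupp : ∀ i : Fin k, ∀ l ∉ M i,
      (∫ x : Fin n → ℝ, x l * p i x) - (∫ x : Fin n → ℝ, x l * pb x) = 0 := fun i l hl =>
    sub_eq_zero.2 <| integral_coord_mul_eq_of_eq_mul_marginal_compl (hp i).2.2 hpb.2.1 hpb.2.2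
      (hfac i) hl (hintb l)
  refine ⟨hsupp, fun i j hij => sum_eq_zero fun l _ => ?_⟩
  by_cases hli : l ∈ M i
  · rw [hsupp j l (disjoint_left.mp (hdisj i j hij) hli), mul_zero]
  · rw [hsupp i l hli, zero_mul]

/-- **Mean-difference orthogonality.** If `(pb, p 1, …, p k)` are Factorized Conditionals
with finite means, then each mean-difference vector `μ i − μ b` is supported on the
coordinates `M i`, and consequently `(μ i − μ b)ᵀ (μ j − μ b) = 0` for `i ≠ j`. -/
theorem statement_8 {n k : ℕ} (Mb : Finset (Fin n)) (M : Fin k → Finset (Fin n))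
    (pb : (Fin n → ℝ) → ℝ) (p : Fin k → (Fin n → ℝ) → ℝ)
    (hpb : IsDensity pb) (hp : ∀ i, IsDensity (p i))
    (hFC : FactorizedConditionals Mb M pb p)
    (hintb : ∀ l : Fin n, Integrable (fun x : Fin n → ℝ => x l * pb x))
    (hinti : ∀ (i : Fin k) (l : Fin n), Integrable (fun x : Fin n → ℝ => x l * p i x)) :
    (∀ i : Fin k, ∀ l ∉ M i, (∫ x : Fin n → ℝ, x l * p i x) - (∫ x : Fin n → ℝ, x l * pb x) = 0) ∧
    (∀ i j : Fin k, i ≠ j →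
      ∑ l : Fin n,
        ((∫ x : Fin n → ℝ, x l * p i x) - (∫ x : Fin n → ℝ, x l * pb x)) *
        ((∫ x : Fin n → ℝ, x l * p j x) - (∫ x : Fin n → ℝ, x l * pb x)) = 0) :=
  statement_8_general Mb M pb p hpb hp hFC hintb
end
end

section
/- For every τ with 0 < τ² < 1/82 there exist probability densities p_b, p_1, p_2 on ℝ⁴ and a time t > 0 such that, writing p^t := N_t[p] for the convolution of p with N(0, t² I), q⁰ := C[p_b, p_1, p_2], and q^t := C[p_b^t, p_1^t, p_2^t], the composed noisy distribution deviates from the ideal diffusion path of the composition by at least 1/2 in Wasserstein-2 distance: W₂(N_t[q⁰], q^t) ≥ 1/2. -/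
open MeasureTheory Finset Real

noncomputable section

/-- The isotropic Gaussian density `N(0, σ² I)` on `ℝ^n`. -/
def gaussIso {n : ℕ} (σ : ℝ) (x : Fin n → ℝ) : ℝ :=
  (2 * π * σ ^ 2) ^ (-(n : ℝ) / 2) * Real.exp (-(∑ i, (x i) ^ 2) / (2 * σ ^ 2))

/-- Gaussian noising `N_σ[p]`: convolution of `p` with `N(0, σ² I)`. -/
def noise {n : ℕ} (σ : ℝ) (p : (Fin n → ℝ) → ℝ) (x : Fin n → ℝ) : ℝ :=
  ∫ y, p y * gaussIso σ (x - y)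

/-- The noising path `p^t := N_t[p]` (with `p^0 = p`). -/
def noiseAt {n : ℕ} (t : ℝ) (p : (Fin n → ℝ) → ℝ) : (Fin n → ℝ) → ℝ :=
  if t = 0 then p else noise t p

/-- The measure on `ℝ^n` with density `p` w.r.t. Lebesgue measure. -/
def densMeasure {n : ℕ} (p : (Fin n → ℝ) → ℝ) : Measure (Fin n → ℝ) :=
  volume.withDensity (fun x => ENNReal.ofReal (p x))

/-- Wasserstein-2 distance between measures on `ℝ^n`: the infimum over couplings of the
root-mean-square Euclidean displacement. -/
def W2 {n : ℕ} (μ ν : Measure (Fin n → ℝ)) : ℝ :=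
  sInf { c : ℝ | ∃ γ : Measure ((Fin n → ℝ) × (Fin n → ℝ)),
    IsProbabilityMeasure γ ∧ γ.map Prod.fst = μ ∧ γ.map Prod.snd = ν ∧
    c = Real.sqrt (∫ z, (∑ i, (z.1 i - z.2 i) ^ 2) ∂γ) }

/-!
Take `p_b = N(0, I)` and `p₁ = p₂ = N(2e₀, τ² I)` and `t = 1`. For isotropic Gaussians the
composition `p_b ∏ pᵢ / p_b` is again Gaussian, since precisions and precision-weighted means
combine linearly, and noising adds `t²` to the variance. So `N_1[q⁰]` and `q¹` are explicit
isotropic Gaussians, whose means differ in the first coordinate by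
`4 (1 - τ²) / ((2 - τ²) (3 - τ²)) ≥ 1/2`. Every coupling shifts the mean of that coordinate by this
gap, so by Jensen's inequality its transport cost is at least the square of the gap.
-/

open ProbabilityTheory
open scoped NNReal

def gaussianScale (m : ℝ) (v : ℝ≥0) : ℝ := (√(2 * π * v))⁻¹ * rexp (-m ^ 2 / (2 * v))

lemma gaussianScale_ne_zero (m : ℝ) {v : ℝ≥0} (hv : v ≠ 0) : gaussianScale m v ≠ 0 := by
  have : 0 < (v : ℝ) := by positivity
  unfold gaussianScale
  positivity

lemma gaussianPDFReal_eq_gaussianScale_mul_exp (m : ℝ) (v : ℝ≥0) (x : ℝ) :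
    gaussianPDFReal m v x =
      gaussianScale m v * rexp (x * (m / v) - x ^ 2 / 2 * (v : ℝ)⁻¹) := by
  rw [gaussianPDFReal, gaussianScale, mul_assoc _ (rexp _), ← Real.exp_add]
  ring_nf

lemma gaussianPDFReal_mul_prod_div {ι : Type*} [Fintype ι] {mb ms : ℝ} {vb w : ℝ≥0}
    {m : ι → ℝ} {v : ι → ℝ≥0} (hvb : vb ≠ 0) (hv : ∀ i, v i ≠ 0) (hw0 : w ≠ 0)
    (hw : (w : ℝ)⁻¹ = (vb : ℝ)⁻¹ + ∑ i, ((v i : ℝ)⁻¹ - (vb : ℝ)⁻¹))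
    (hms : ms / w = mb / vb + ∑ i, (m i / v i - mb / vb)) :
    ∃ C ≠ 0, ∀ x, gaussianPDFReal mb vb x * ∏ i, gaussianPDFReal (m i) (v i) x /
      gaussianPDFReal mb vb x = C * gaussianPDFReal ms w x := by
  refine ⟨gaussianScale mb vb * (∏ i, gaussianScale (m i) (v i) / gaussianScale mb vb) /
    gaussianScale ms w, ?_, fun x => ?_⟩
  · have := gaussianScale_ne_zero mb hvb
    exact div_ne_zero (mul_ne_zero this (prod_ne_zero_iff.2 fun i _ =>
      div_ne_zero (gaussianScale_ne_zero _ (hv i)) this)) (gaussianScale_ne_zero _ hw0)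
  have hexp : x * (mb / vb) - x ^ 2 / 2 * (vb : ℝ)⁻¹ +
      ∑ i, ((x * (m i / v i) - x ^ 2 / 2 * (v i : ℝ)⁻¹) - (x * (mb / vb) - x ^ 2 / 2 * (vb : ℝ)⁻¹))
      = x * (ms / w) - x ^ 2 / 2 * (w : ℝ)⁻¹ := by
    have hterm : ∀ i, (x * (m i / v i) - x ^ 2 / 2 * (v i : ℝ)⁻¹) -
        (x * (mb / vb) - x ^ 2 / 2 * (vb : ℝ)⁻¹) =
        x * (m i / v i - mb / vb) - x ^ 2 / 2 * ((v i : ℝ)⁻¹ - (vb : ℝ)⁻¹) := fun i => by ring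
    rw [hw, hms, sum_congr rfl fun i _ => hterm i, sum_sub_distrib,
      ← mul_sum, ← mul_sum]
    ring
  simp only [gaussianPDFReal_eq_gaussianScale_mul_exp, mul_div_mul_comm, prod_mul_distrib,
    ← Real.exp_sub, ← Real.exp_sum]
  rw [← hexp, Real.exp_add]
  field_simp [gaussianScale_ne_zero ms hw0]

lemma integral_gaussianPDFReal_mul_gaussianPDFReal_sub (m : ℝ) {v s : ℝ≥0} (hv : v ≠ 0)
    (hs : s ≠ 0) (x : ℝ) :
    ∫ y, gaussianPDFReal m v y * gaussianPDFReal 0 s (x - y) = gaussianPDFReal m (v + s) x := by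
  have hv' : 0 < (v : ℝ) := by positivity
  have hs' : 0 < (s : ℝ) := by positivity
  set a : ℝ := (v + s) / (2 * v * s)
  set c : ℝ := (m * s + x * v) / (v + s)
  set K : ℝ := (√(2 * π * v))⁻¹ * (√(2 * π * s))⁻¹ * rexp (-(x - m) ^ 2 / (2 * (v + s)))
  have hsquare : ∀ y, gaussianPDFReal m v y * gaussianPDFReal 0 s (x - y) =
      K * rexp (-a * (y - c) ^ 2) := fun y => by
    have hE : -(y - m) ^ 2 / (2 * v) + -(x - y - 0) ^ 2 / (2 * s) =
        -(x - m) ^ 2 / (2 * (v + s)) + -a * (y - c) ^ 2 := by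
      simp only [a, c]; field_simp; ring
    rw [gaussianPDFReal, gaussianPDFReal, mul_mul_mul_comm, ← Real.exp_add, hE, Real.exp_add]
    ring
  have hK : K * √(π / a) = gaussianPDFReal m (v + s) x := by
    have hconst : (√(2 * π * v))⁻¹ * (√(2 * π * s))⁻¹ * √(π / a) =
        (√(2 * π * (v + s)))⁻¹ := by
      rw [← Real.sqrt_inv, ← Real.sqrt_inv, ← Real.sqrt_inv, ← Real.sqrt_mul (by positivity),
        ← Real.sqrt_mul (by positivity)]
      congr 1
      simp only [a]; field_simp
    rw [gaussianPDFReal, NNReal.coe_add, ← hconst]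
    ring
  simp_rw [hsquare]
  rw [integral_const_mul, integral_sub_right_eq_self (fun y => rexp (-a * y ^ 2)) c,
    integral_gaussian, hK]

def gaussianPi {n : ℕ} (m : Fin n → ℝ) (v : ℝ≥0) (x : Fin n → ℝ) : ℝ :=
  ∏ i, gaussianPDFReal (m i) v (x i)

section gaussianPi

variable {n : ℕ}

lemma integrable_gaussianPi (m : Fin n → ℝ) (v : ℝ≥0) : Integrable (gaussianPi m v) :=
  Integrable.fintype_prod (f := fun i => gaussianPDFReal (m i) v) fun i =>
    integrable_gaussianPDFReal (m i) v

lemma isDensity_gaussianPi (m : Fin n → ℝ) {v : ℝ≥0} (hv : v ≠ 0) :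
    IsDensity (gaussianPi m v) := by
  refine ⟨fun x => prod_nonneg fun i _ => gaussianPDFReal_nonneg _ _ _,
    integrable_gaussianPi m v, ?_⟩
  unfold gaussianPi
  rw [integral_fintype_prod_volume_eq_prod (f := fun i => gaussianPDFReal (m i) v)]
  exact prod_eq_one fun i _ => integral_gaussianPDFReal_eq_one (m i) hv

lemma densMeasure_gaussianPi (m : Fin n → ℝ) {v : ℝ≥0} (hv : v ≠ 0) :
    densMeasure (gaussianPi m v) = Measure.pi fun i => gaussianReal (m i) v := by
  refine (Measure.pi_eq fun s hs => ?_).symm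
  have hbox : ∫ x in Set.univ.pi s, gaussianPi m v x =
      ∏ i, ∫ y in s i, gaussianPDFReal (m i) v y := by
    unfold gaussianPi
    rw [volume_pi, Measure.restrict_pi_pi,
      integral_fintype_prod_eq_prod (f := fun i => gaussianPDFReal (m i) v)]
  rw [densMeasure, withDensity_apply _ (MeasurableSet.univ_pi hs),
    ← ofReal_integral_eq_lintegral_ofReal (integrable_gaussianPi m v).integrableOn
      (ae_of_all _ fun x => prod_nonneg fun i _ => gaussianPDFReal_nonneg _ _ _),
    hbox, ENNReal.ofReal_prod_of_nonneg fun i _ =>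
      setIntegral_nonneg_of_ae (ae_of_all _ fun y => gaussianPDFReal_nonneg _ _ _)]
  exact prod_congr rfl fun i _ => (gaussianReal_apply_eq_integral (m i) hv (s i)).symm

lemma gaussIso_eq_gaussianPi {σ : ℝ≥0} (hσ : σ ≠ 0) :
    gaussIso (n := n) σ = gaussianPi 0 (σ ^ 2) := by
  have hA : 0 < 2 * π * (σ : ℝ) ^ 2 := by positivity
  funext x
  simp only [gaussIso, gaussianPi, gaussianPDFReal, Pi.zero_apply, sub_zero, NNReal.coe_pow,
    prod_mul_distrib, prod_const, card_univ, Fintype.card_fin, ← Real.exp_sum, ← sum_div,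
    sum_neg_distrib]
  rw [Real.sqrt_eq_rpow, ← Real.rpow_neg hA.le, ← Real.rpow_mul_natCast hA.le]
  ring_nf

lemma noise_gaussianPi {σ : ℝ≥0} (hσ : σ ≠ 0) (m : Fin n → ℝ) {v : ℝ≥0} (hv : v ≠ 0) :
    noise σ (gaussianPi m v) = gaussianPi m (v + σ ^ 2) := by
  funext x
  simp only [noise, gaussIso_eq_gaussianPi hσ, gaussianPi, Pi.zero_apply, Pi.sub_apply,
    ← prod_mul_distrib]
  rw [integral_fintype_prod_volume_eq_prod
    (f := fun i y => gaussianPDFReal (m i) v y * gaussianPDFReal 0 (σ ^ 2) (x i - y))]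
  exact prod_congr rfl fun i _ => integral_gaussianPDFReal_mul_gaussianPDFReal_sub (m i) hv
    (pow_ne_zero 2 hσ) (x i)

end gaussianPi

lemma comp_eq_of_compRaw_eq_const_mul {n k : ℕ} {pb q : (Fin n → ℝ) → ℝ}
    {p : Fin k → (Fin n → ℝ) → ℝ} {C : ℝ} (hC : C ≠ 0) (hq : ∫ x, q x = 1)
    (h : ∀ x, compRaw pb p x = C * q x) : comp pb p = q := by
  funext x
  rw [comp, h, integral_congr_ae (ae_of_all _ h), integral_const_mul, hq, mul_one,
    mul_div_cancel_left₀ _ hC]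

lemma comp_gaussianPi {n k : ℕ} {mb ms : Fin n → ℝ} {vb w : ℝ≥0} {m : Fin k → Fin n → ℝ}
    {v : Fin k → ℝ≥0} (hvb : vb ≠ 0) (hv : ∀ i, v i ≠ 0) (hw0 : w ≠ 0)
    (hw : (w : ℝ)⁻¹ = (vb : ℝ)⁻¹ + ∑ i, ((v i : ℝ)⁻¹ - (vb : ℝ)⁻¹))
    (hms : ∀ j, ms j / w = mb j / vb + ∑ i, (m i j / v i - mb j / vb)) :
    comp (gaussianPi mb vb) (fun i => gaussianPi (m i) (v i)) = gaussianPi ms w := by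
  choose C hC hcoord using fun j =>
    gaussianPDFReal_mul_prod_div (m := fun i => m i j) hvb hv hw0 hw (hms j)
  refine comp_eq_of_compRaw_eq_const_mul (C := ∏ j, C j) (prod_ne_zero_iff.2 fun j _ => hC j)
    (isDensity_gaussianPi ms hw0).2.2 fun x => ?_
  simp only [compRaw, gaussianPi, ← prod_div_distrib]
  rw [prod_comm, ← prod_mul_distrib, ← prod_mul_distrib]
  exact prod_congr rfl fun j _ => hcoord j (x j)

lemma abs_integral_eval_sub_le_W2 {n : ℕ} {μ ν : Measure (Fin n → ℝ)} [IsProbabilityMeasure μ]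
    [IsProbabilityMeasure ν] (hμ : ∀ i, MemLp (fun x => x i) 2 μ)
    (hν : ∀ i, MemLp (fun x => x i) 2 ν) (i : Fin n) :
    |∫ x, x i ∂μ - ∫ x, x i ∂ν| ≤ W2 μ ν := by
  refine le_csInf ⟨_, μ.prod ν, inferInstance, by simp, by simp, rfl⟩ ?_
  rintro _ ⟨γ, hγ, hfst, hsnd, rfl⟩
  have hX₁ : ∀ j, MemLp (fun z : (Fin n → ℝ) × (Fin n → ℝ) => z.1 j) 2 γ := fun j =>
    (hμ j).comp_measurePreserving ⟨measurable_fst, hfst⟩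
  have hX₂ : ∀ j, MemLp (fun z : (Fin n → ℝ) × (Fin n → ℝ) => z.2 j) 2 γ := fun j =>
    (hν j).comp_measurePreserving ⟨measurable_snd, hsnd⟩
  set X : Fin n → (Fin n → ℝ) × (Fin n → ℝ) → ℝ := fun j z => z.1 j - z.2 j
  have hX : ∀ j, MemLp (X j) 2 γ := fun j => (hX₁ j).sub (hX₂ j)
  have hmean : ∫ z, X i z ∂γ = ∫ x, x i ∂μ - ∫ x, x i ∂ν := by
    rw [integral_sub ((hX₁ i).integrable one_le_two) ((hX₂ i).integrable one_le_two), ← hfst,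
      ← hsnd, integral_map measurable_fst.aemeasurable (f := fun x : Fin n → ℝ => x i)
        (measurable_pi_apply i).aestronglyMeasurable,
      integral_map measurable_snd.aemeasurable (f := fun x : Fin n → ℝ => x i)
        (measurable_pi_apply i).aestronglyMeasurable]
  have hjensen : (∫ z, X i z ∂γ) ^ 2 ≤ ∫ z, X i z ^ 2 ∂γ := by
    have := variance_nonneg (X i) γ
    rw [variance_eq_sub (hX i)] at this
    simpa using this
  have hcoord : ∫ z, X i z ^ 2 ∂γ ≤ ∫ z, ∑ j, X j z ^ 2 ∂γ :=
    integral_mono (hX i).integrable_sq (integrable_finsetSum _ fun j _ => (hX j).integrable_sq)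
      fun z => single_le_sum (f := fun j => X j z ^ 2) (fun j _ => sq_nonneg _) (mem_univ i)
  rw [← hmean, ← Real.sqrt_sq_eq_abs]
  exact Real.sqrt_le_sqrt (hjensen.trans hcoord)

lemma abs_sub_le_W2_gaussianPi {n : ℕ} (m m' : Fin n → ℝ) {v v' : ℝ≥0} (hv : v ≠ 0)
    (hv' : v' ≠ 0) (i : Fin n) :
    |m i - m' i| ≤ W2 (densMeasure (gaussianPi m v)) (densMeasure (gaussianPi m' v')) := by
  have hmean : ∀ (m : Fin n → ℝ) (v : ℝ≥0),
      ∫ x, x i ∂Measure.pi (fun j => gaussianReal (m j) v) = m i := fun m v =>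
    (integral_comp_eval (X := fun _ => ℝ) (f := id) aestronglyMeasurable_id).trans
      integral_id_gaussianReal
  have hmemLp : ∀ (m : Fin n → ℝ) (v : ℝ≥0) j,
      MemLp (fun x => x j) 2 (Measure.pi fun j => gaussianReal (m j) v) := fun m v j =>
    (memLp_id_gaussianReal 2).comp_measurePreserving (measurePreserving_eval _ j)
  rw [densMeasure_gaussianPi m hv, densMeasure_gaussianPi m' hv']
  simpa only [hmean] using abs_integral_eval_sub_le_W2 (hmemLp m v) (hmemLp m' v') i

lemma comp_gaussianPi_zero_pair {n : ℕ} (m : Fin n → ℝ) {vb v w : ℝ≥0} (hvb : vb ≠ 0)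
    (hv : v ≠ 0) (hw0 : w ≠ 0) (hw : (w : ℝ)⁻¹ = 2 * (v : ℝ)⁻¹ - (vb : ℝ)⁻¹) :
    comp (gaussianPi 0 vb) ![gaussianPi m v, gaussianPi m v] =
      gaussianPi ((2 * w / v : ℝ) • m) w := by
  have hpair : ![gaussianPi m v, gaussianPi m v] = fun _ => gaussianPi m v := by
    ext i; fin_cases i <;> rfl
  rw [hpair]
  refine comp_gaussianPi hvb (fun _ => hv) hw0 (by rw [hw, Fin.sum_univ_two]; ring) fun j => ?_
  have : (w : ℝ) ≠ 0 := NNReal.coe_ne_zero.2 hw0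
  simp only [Fin.sum_univ_two, Pi.smul_apply, Pi.zero_apply, smul_eq_mul]
  field_simp
  ring

/-- **The composed noisy distribution deviates from the ideal diffusion path.** For every
`τ` with `0 < τ² < 1/82` there exist probability densities `p_b, p_1, p_2` on `ℝ⁴` and a
time `t > 0` such that `W₂(N_t[q⁰], q^t) ≥ 1/2`, where `q⁰ = C[p_b, p_1, p_2]` and
`q^t = C[p_b^t, p_1^t, p_2^t]`. -/
theorem statement_16 (τ : ℝ) (hτpos : 0 < τ ^ 2) (hτ : τ ^ 2 < 1 / 82) :
    ∃ pb p1 p2 : (Fin 4 → ℝ) → ℝ,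
      IsDensity pb ∧ IsDensity p1 ∧ IsDensity p2 ∧
      ∃ t : ℝ, 0 < t ∧
        (1 / 2 : ℝ) ≤
          W2 (densMeasure (noise t (comp pb ![p1, p2])))
             (densMeasure (comp (noise t pb) ![noise t p1, noise t p2])) := by
  obtain ⟨s, hs⟩ : ∃ s : ℝ≥0, (s : ℝ) = τ ^ 2 := ⟨⟨τ ^ 2, sq_nonneg τ⟩, rfl⟩
  rw [← hs] at hτpos hτ
  have h2 : 0 < 2 - (s : ℝ) := by linarith
  have h3 : 0 < 3 - (s : ℝ) := by linarith
  -- `w` and `w'` are the variances of `q⁰` and of `q¹`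
  obtain ⟨w, hw⟩ : ∃ w : ℝ≥0, (w : ℝ) = s / (2 - s) := ⟨⟨_, by positivity⟩, rfl⟩
  obtain ⟨w', hw'⟩ : ∃ w' : ℝ≥0, (w' : ℝ) = 2 * (s + 1) / (3 - s) := ⟨⟨_, by positivity⟩, rfl⟩
  have hs0 : s ≠ 0 := NNReal.coe_ne_zero.1 hτpos.ne'
  have hw0 : w ≠ 0 := by rw [← NNReal.coe_ne_zero, hw]; positivity
  have hw'0 : w' ≠ 0 := by rw [← NNReal.coe_ne_zero, hw']; positivity
  have hprec : (w : ℝ)⁻¹ = 2 * (s : ℝ)⁻¹ - ((1 : ℝ≥0) : ℝ)⁻¹ := by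
    rw [hw, NNReal.coe_one]; field_simp
  have hprec' : (w' : ℝ)⁻¹ = 2 * ((s + 1 : ℝ≥0) : ℝ)⁻¹ - ((1 + 1 : ℝ≥0) : ℝ)⁻¹ := by
    push_cast; rw [hw']; field_simp; ring
  have hnoise : ∀ (m : Fin 4 → ℝ) {v : ℝ≥0}, v ≠ 0 →
      noise 1 (gaussianPi m v) = gaussianPi m (v + 1) := fun m v hv => by
    simpa using noise_gaussianPi one_ne_zero m hv
  refine ⟨gaussianPi 0 1, gaussianPi (Pi.single 0 2) s, gaussianPi (Pi.single 0 2) s,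
    isDensity_gaussianPi _ one_ne_zero, isDensity_gaussianPi _ hs0, isDensity_gaussianPi _ hs0,
    1, one_pos, ?_⟩
  rw [comp_gaussianPi_zero_pair _ one_ne_zero hs0 hw0 hprec, hnoise _ hw0, hnoise _ one_ne_zero,
    hnoise _ hs0, comp_gaussianPi_zero_pair _ (by positivity) (by positivity) hw'0 hprec']
  refine (neg_le_abs _).trans' ?_ |>.trans (abs_sub_le_W2_gaussianPi _ _ (by positivity) hw'0 0)
  simp only [Pi.smul_apply, smul_eq_mul, Pi.single_eq_same, NNReal.coe_add, NNReal.coe_one, hw,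
    hw']
  field_simp
  nlinarith
end
end

section
/- Let n ≥ 1 and q ∈ (0,1). On the hypercube {0,1}^n, define the background distribution p_b(x) = q^{nnz(x)} (1−q)^{n − nnz(x)} (i.i.d. Bernoulli(q) coordinates, where nnz(x) is the number of ones in x), the conditionals p_i(x) = 1{x_i = 1} · q^{nnz(x restricted to coordinates ≠ i)} (1−q)^{(n−1) − nnz(x restricted to coordinates ≠ i)} for i = 1,…,n, and the unconditional mixture p_u(x) = (1/n) ∑_{i=1}^n p_i(x). Then the chi-squared-type discrepancy satisfies exactly E_{x ∼ p_b}[ ((p_u(x) − p_b(x)) / p_b(x))² ] = (1−q)/(nq); in particular this quantity tends to 0 as n → ∞ for fixed q. -/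
open Finset

noncomputable section

/-- The number of ones in `x ∈ {0,1}^n`. -/
def nnz {n : ℕ} (x : Fin n → Bool) : ℕ :=
  (Finset.univ.filter (fun i => x i = true)).card

/-- The number of ones of `x` among the coordinates other than `i`. -/
def nnzOff {n : ℕ} (i : Fin n) (x : Fin n → Bool) : ℕ :=
  (Finset.univ.filter (fun j => j ≠ i ∧ x j = true)).card

lemma nnz_le {n : ℕ} (x : Fin n → Bool) : nnz x ≤ n := by
  simpa [nnz] using (Finset.card_filter_le Finset.univ (fun i => x i = true)).trans
    (by simp)

lemma nnzOff_succ {n : ℕ} (i : Fin n) (x : Fin n → Bool) (h : x i = true) :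
    nnzOff i x + 1 = nnz x := by
  have hset : (Finset.univ.filter (fun j => j ≠ i ∧ x j = true))
      = (Finset.univ.filter (fun j => x j = true)).erase i := by
    ext j
    simp [Finset.mem_erase, and_comm]
  have hi : i ∈ Finset.univ.filter (fun j => x j = true) := by simp [h]
  have hpos : 1 ≤ (Finset.univ.filter (fun j : Fin n => x j = true)).card :=
    Finset.card_pos.mpr ⟨i, hi⟩
  rw [nnzOff, hset, Finset.card_erase_of_mem hi, nnz]
  omega

lemma pb_eq_prod {n : ℕ} (q : ℝ) (x : Fin n → Bool) :
    q ^ nnz x * (1 - q) ^ (n - nnz x) = ∏ i, (if x i = true then q else 1 - q) := by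
  rw [Finset.prod_ite, Finset.prod_const, Finset.prod_const]
  have h := Finset.card_filter_add_card_filter_not
    (s := (Finset.univ : Finset (Fin n))) (p := fun i => x i = true)
  simp only [Finset.card_univ, Fintype.card_fin] at h
  have : (Finset.univ.filter (fun i => ¬ x i = true)).card = n - nnz x := by
    rw [nnz]; omega
  rw [this, nnz]

lemma key_sum (n : ℕ) (q : ℝ) :
    ∑ x : Fin n → Bool, (∏ i, (if x i = true then q else 1 - q)) * ((nnz x : ℝ) - n * q) ^ 2
      = n * (q * (1 - q)) := by
  set cb : Bool → ℝ := fun b => (if b = true then (1:ℝ) else 0) - q with hcb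
  set w : Bool → ℝ := fun b => if b = true then q else 1 - q with hw
  have hsum : ∀ x : Fin n → Bool, ((nnz x : ℝ) - n * q) = ∑ i, cb (x i) := by
    intro x
    simp only [hcb, Finset.sum_sub_distrib, Finset.sum_boole, Finset.sum_const,
      Finset.card_univ, Fintype.card_fin, nsmul_eq_mul, nnz]
  have hij : ∀ i j : Fin n,
      (∑ x : Fin n → Bool, (∏ k, w (x k)) * (cb (x i) * cb (x j)))
        = if i = j then q * (1 - q) else 0 := by
    intro i j
    have h1 : ∀ x : Fin n → Bool,
        (∏ k, w (x k)) * (cb (x i) * cb (x j))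
          = ∏ k, (w (x k) * ((if k = i then cb (x k) else 1) * (if k = j then cb (x k) else 1))) := by
      intro x
      rw [Finset.prod_mul_distrib, Finset.prod_mul_distrib, Finset.prod_ite_eq',
        Finset.prod_ite_eq']
      simp
    simp only [h1]
    have hps := Finset.prod_univ_sum (fun _ : Fin n => (Finset.univ : Finset Bool))
      (fun k b => w b * ((if k = i then cb b else 1) * (if k = j then cb b else 1)))
    rw [Fintype.piFinset_univ] at hps
    rw [← hps]
    by_cases hij' : i = j
    · subst hij'
      have hfac : ∀ k : Fin n,
          (∑ b : Bool, w b * ((if k = i then cb b else 1) * (if k = i then cb b else 1)))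
            = if k = i then q * (1 - q) else 1 := by
        intro k
        by_cases hk : k = i <;>
          simp [hk, hw, hcb, Fintype.sum_bool] <;> ring
      rw [Finset.prod_congr rfl (fun k _ => hfac k), Finset.prod_ite_eq']
      simp
    · rw [if_neg hij']
      apply Finset.prod_eq_zero (Finset.mem_univ i)
      have : i = j ↔ False := by simp [hij']
      simp [hw, hcb, Fintype.sum_bool, hij', this]
      ring
  calc ∑ x : Fin n → Bool, (∏ i, w (x i)) * ((nnz x : ℝ) - n * q) ^ 2
      = ∑ x : Fin n → Bool, ∑ i, ∑ j, (∏ k, w (x k)) * (cb (x i) * cb (x j)) := by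
        refine Finset.sum_congr rfl fun x _ => ?_
        rw [hsum x, sq, Finset.sum_mul_sum, Finset.mul_sum]
        exact Finset.sum_congr rfl fun i _ => by rw [Finset.mul_sum]
    _ = ∑ i, ∑ x : Fin n → Bool, ∑ j, (∏ k, w (x k)) * (cb (x i) * cb (x j)) :=
        Finset.sum_comm
    _ = ∑ i, ∑ j, ∑ x : Fin n → Bool, (∏ k, w (x k)) * (cb (x i) * cb (x j)) :=
        Finset.sum_congr rfl fun i _ => Finset.sum_comm
    _ = ∑ i : Fin n, ∑ j : Fin n, if i = j then q * (1 - q) else 0 := by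
        exact Finset.sum_congr rfl fun i _ => Finset.sum_congr rfl fun j _ => hij i j
    _ = ∑ i : Fin n, q * (1 - q) := by
        refine Finset.sum_congr rfl fun i _ => ?_
        simp [Finset.sum_ite_eq]
    _ = n * (q * (1 - q)) := by
        rw [Finset.sum_const, Finset.card_univ, Fintype.card_fin, nsmul_eq_mul]

/-- **The unconditional mixture converges to the Bernoulli background.** On `{0,1}^n`
with background `p_b(x) = q^{nnz(x)}(1−q)^{n−nnz(x)}`, conditionals
`p_i(x) = 1{x_i = 1} q^{nnz(x_{≠i})}(1−q)^{(n−1)−nnz(x_{≠i})}` and the uniform mixture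
`p_u = (1/n) ∑ i, p_i`, the chi-squared-type discrepancy is exactly
`E_{x∼p_b}[((p_u(x) − p_b(x))/p_b(x))²] = (1−q)/(nq)`; in particular (for fixed `q`) this
quantity tends to `0` as `n → ∞`. -/
theorem statement_19 (n : ℕ) (hn : 1 ≤ n) (q : ℝ) (hq0 : 0 < q) (hq1 : q < 1) :
    let pb : (Fin n → Bool) → ℝ := fun x => q ^ nnz x * (1 - q) ^ (n - nnz x)
    let p : Fin n → (Fin n → Bool) → ℝ := fun i x =>
      if x i = true then q ^ nnzOff i x * (1 - q) ^ ((n - 1) - nnzOff i x) else 0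
    let pu : (Fin n → Bool) → ℝ := fun x => (1 / (n : ℝ)) * ∑ i, p i x
    (∑ x : Fin n → Bool, pb x * ((pu x - pb x) / pb x) ^ 2) = (1 - q) / ((n : ℝ) * q) ∧
    Filter.Tendsto (fun m : ℕ => (1 - q) / ((m : ℝ) * q)) Filter.atTop (nhds 0) := by
  intro pb p pu
  have hq1' : (0:ℝ) < 1 - q := by linarith
  have hn0 : (n : ℝ) ≠ 0 := Nat.cast_ne_zero.mpr (by omega)
  have hq0' : q ≠ 0 := ne_of_gt hq0
  constructor
  · have hpb_pos : ∀ x, 0 < pb x := fun x => mul_pos (pow_pos hq0 _) (pow_pos hq1' _)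
    have hp : ∀ i x, p i x = if x i = true then pb x / q else 0 := by
      intro i x
      simp only [p, pb]
      by_cases h : x i = true
      · rw [if_pos h, if_pos h]
        have h1 : nnzOff i x + 1 = nnz x := nnzOff_succ i x h
        have hle : nnz x ≤ n := nnz_le x
        have e1 : q ^ nnz x = q ^ nnzOff i x * q := by rw [← h1, pow_succ]
        have e2 : (n - 1) - nnzOff i x = n - nnz x := by omega
        rw [e1, e2]
        field_simp
      · rw [if_neg h, if_neg h]
    have hpu : ∀ x, pu x = (nnz x : ℝ) * pb x / ((n : ℝ) * q) := by
      intro x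
      simp only [pu]
      rw [Finset.sum_congr rfl fun i _ => hp i x, Finset.sum_ite, Finset.sum_const,
        Finset.sum_const_zero, add_zero, nsmul_eq_mul]
      rw [show (Finset.univ.filter (fun i => x i = true)).card = nnz x from rfl]
      field_simp
    have hterm : ∀ x, pb x * ((pu x - pb x) / pb x) ^ 2
        = (1 / ((n:ℝ) * q)) ^ 2 * ((∏ i, (if x i = true then q else 1 - q))
            * ((nnz x : ℝ) - n * q) ^ 2) := by
      intro x
      have hpbne : pb x ≠ 0 := ne_of_gt (hpb_pos x)
      have hr : (pu x - pb x) / pb x = ((nnz x : ℝ) - n * q) / ((n:ℝ) * q) := by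
        rw [hpu]
        field_simp
      rw [hr, ← pb_eq_prod]
      show pb x * _ = _
      field_simp
      rw [show pb x = q ^ nnz x * (1 - q) ^ (n - nnz x) from rfl]
      ring
    rw [Finset.sum_congr rfl fun x _ => hterm x, ← Finset.mul_sum, key_sum]
    field_simp
  · have : ∀ m : ℕ, (1 - q) / ((m : ℝ) * q) = ((1 - q) / q) / m := by
      intro m
      rw [div_div, mul_comm]
    simp only [this]
    exact tendsto_const_div_atTop_nhds_zero_nat _
end
end
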